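/- Let σ belong to the smallest class C of rational polyhedral cones closed under direct sum and containing all rational simplex cones. If dim(σ) = n > 1, then σ has at most 2n − 2 extreme rays. -/
import Mathlib


open scoped BigOperators

/-- The cone of nonnegative rational combinations of elements of `S`. -/
def posSpan {n : ℕ} (S : Set (Fin n → ℚ)) : Set (Fin n → ℚ) :=
  {x | ∃ (k : ℕ) (c : Fin k → ℚ) (b : Fin k → (Fin n → ℚ)),
    (∀ i, 0 ≤ c i) ∧ (∀ i, b i ∈ S) ∧ x = ∑ i, c i • b i}

/-- A rational polyhedral cone: `posSpan` of a finite set. -/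
def IsPolyCone {n : ℕ} (σ : Set (Fin n → ℚ)) : Prop :=
  ∃ B : Finset (Fin n → ℚ), σ = posSpan (B : Set (Fin n → ℚ))

/-- A cone is strongly convex if `σ ∩ (-σ) = {0}`. -/
def StronglyConvex {n : ℕ} (σ : Set (Fin n → ℚ)) : Prop :=
  ∀ x, x ∈ σ → -x ∈ σ → x = 0

/-- dot product in `ℚ^n`. -/
def dotQ {n : ℕ} (c x : Fin n → ℚ) : ℚ := ∑ i, c i * x i

/-- `R` is an extreme ray of `σ`: a one-dimensional face cut out by a
supporting vector `c`. -/
def IsExtremeRay {n : ℕ} (σ R : Set (Fin n → ℚ)) : Prop :=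
  ∃ c : Fin n → ℚ, (∀ x ∈ σ, 0 ≤ dotQ c x) ∧
    R = {x ∈ σ | dotQ c x = 0} ∧
    Module.finrank ℚ (Submodule.span ℚ R) = 1

/-- The dimension of a cone: dimension of its rational linear span. -/
noncomputable def coneDim {n : ℕ} (σ : Set (Fin n → ℚ)) : ℕ :=
  Module.finrank ℚ (Submodule.span ℚ σ)

/-- `σ` is the direct sum of `σ₁` and `σ₂` along `a`. -/
def IsDirectSumAlong {n : ℕ} (σ₁ σ₂ σ : Set (Fin n → ℚ)) (a : Fin n → ℚ) : Prop :=
  a ∈ σ₁ ∩ σ₂ ∧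
  Submodule.span ℚ σ₁ ⊓ Submodule.span ℚ σ₂ = Submodule.span ℚ {a} ∧
  σ = posSpan (σ₁ ∪ σ₂)

/-- `σ` is a direct sum of `σ₁` and `σ₂`. -/
def IsDirectSum {n : ℕ} (σ₁ σ₂ σ : Set (Fin n → ℚ)) : Prop :=
  ∃ a, IsDirectSumAlong σ₁ σ₂ σ a

/-- `a` lies on an extreme ray of `σ`. -/
def OnExtremeRay {n : ℕ} (σ : Set (Fin n → ℚ)) (a : Fin n → ℚ) : Prop :=
  ∃ R, IsExtremeRay σ R ∧ a ∈ R

/-- The ray `ℚ⁺ r`. -/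
def rayOf {n : ℕ} (r : Fin n → ℚ) : Set (Fin n → ℚ) :=
  {x | ∃ q : ℚ, 0 ≤ q ∧ x = q • r}

/-- General bipyramidal cones: the smallest class of cones containing all
2-simplex cones and closed under direct sum of internal type. -/
inductive GenBipyramidal {n : ℕ} : Set (Fin n → ℚ) → Prop
  | simplex2 (r₁ r₂ : Fin n → ℚ) (h : LinearIndependent ℚ ![r₁, r₂]) :
      GenBipyramidal (posSpan {r₁, r₂})
  | internal (σ₁ σ₂ : Set (Fin n → ℚ)) (a : Fin n → ℚ)
      (h₁ : GenBipyramidal σ₁) (h₂ : GenBipyramidal σ₂)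
      (hds : IsDirectSumAlong σ₁ σ₂ (posSpan (σ₁ ∪ σ₂)) a)
      (hint₁ : ¬ OnExtremeRay σ₁ a) (hint₂ : ¬ OnExtremeRay σ₂ a) :
      GenBipyramidal (posSpan (σ₁ ∪ σ₂))

/-- The smallest class of cones containing all rational simplex cones and
closed under direct sum (the class of complete intersection cones). -/
inductive CICone {n : ℕ} : Set (Fin n → ℚ) → Prop
  | simplex (s : ℕ) (r : Fin s → (Fin n → ℚ)) (h : LinearIndependent ℚ r) :
      CICone (posSpan (Set.range r))
  | dsum (σ₁ σ₂ : Set (Fin n → ℚ)) (h₁ : CICone σ₁) (h₂ : CICone σ₂)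
      (hds : IsDirectSum σ₁ σ₂ (posSpan (σ₁ ∪ σ₂))) :
      CICone (posSpan (σ₁ ∪ σ₂))

section AuxCI

variable {n : ℕ}

def dotL (c : Fin n → ℚ) : (Fin n → ℚ) →ₗ[ℚ] ℚ where
  toFun := dotQ c
  map_add' x y := by simp [dotQ, mul_add, Finset.sum_add_distrib]
  map_smul' q x := by
    simp [dotQ, Finset.mul_sum, mul_comm, mul_left_comm]

lemma subset_posSpan (S : Set (Fin n → ℚ)) : S ⊆ posSpan S := by
  intro x hx
  exact ⟨1, fun _ => 1, fun _ => x, fun _ => zero_le_one, fun _ => hx, by simp⟩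

lemma posSpan_subset_span (S : Set (Fin n → ℚ)) :
    posSpan S ⊆ (Submodule.span ℚ S : Set (Fin n → ℚ)) := by
  rintro x ⟨k, c, b, hc, hb, rfl⟩
  exact Submodule.sum_mem _ fun i _ => Submodule.smul_mem _ _ (Submodule.subset_span (hb i))

lemma span_posSpan (S : Set (Fin n → ℚ)) :
    Submodule.span ℚ (posSpan S) = Submodule.span ℚ S :=
  le_antisymm (Submodule.span_le.mpr (posSpan_subset_span S))
    (Submodule.span_mono (subset_posSpan S))

lemma dotQ_eq_zero_of_mem_span {c : Fin n → ℚ} {R : Set (Fin n → ℚ)}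
    (h : ∀ x ∈ R, dotQ c x = 0) {x : Fin n → ℚ}
    (hx : x ∈ Submodule.span ℚ R) : dotQ c x = 0 := by
  have hker : Submodule.span ℚ R ≤ LinearMap.ker (dotL c) :=
    Submodule.span_le.mpr fun y hy => LinearMap.mem_ker.mpr (h y hy)
  exact hker hx

lemma ray_eq_inter_span {σ R : Set (Fin n → ℚ)} (h : IsExtremeRay σ R) :
    R = σ ∩ (Submodule.span ℚ R : Set (Fin n → ℚ)) := by
  obtain ⟨c, hc, hR, hrank⟩ := h
  have hvan : ∀ y ∈ R, dotQ c y = 0 := by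
    intro y hy; rw [hR] at hy; exact hy.2
  ext x
  constructor
  · intro hx
    refine ⟨?_, Submodule.subset_span hx⟩
    rw [hR] at hx; exact hx.1
  · rintro ⟨hxσ, hxsp⟩
    rw [hR]
    exact ⟨hxσ, dotQ_eq_zero_of_mem_span hvan hxsp⟩

lemma span_singleton_eq_span {R : Set (Fin n → ℚ)}
    (hrank : Module.finrank ℚ (Submodule.span ℚ R) = 1)
    {b : Fin n → ℚ} (hb : b ∈ R) (hb0 : b ≠ 0) :
    Submodule.span ℚ {b} = Submodule.span ℚ R :=
  Submodule.eq_of_le_of_finrank_eq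
    (Submodule.span_mono (Set.singleton_subset_iff.mpr hb))
    (by rw [hrank, finrank_span_singleton hb0])

lemma exists_ne_zero_of_rank_one {R : Set (Fin n → ℚ)}
    (hrank : Module.finrank ℚ (Submodule.span ℚ R) = 1) :
    ∃ b ∈ R, b ≠ 0 := by
  by_contra h
  push_neg at h
  have hbot : Submodule.span ℚ R = ⊥ := Submodule.span_eq_bot.mpr h
  rw [hbot] at hrank
  simp [finrank_bot] at hrank

lemma exists_gen {S R : Set (Fin n → ℚ)}
    (h : IsExtremeRay (posSpan S) R) : ∃ b ∈ S, b ≠ 0 ∧ b ∈ R := by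
  obtain ⟨c, hc, hR, hrank⟩ := h
  obtain ⟨x, hxR, hx0⟩ := exists_ne_zero_of_rank_one hrank
  rw [hR] at hxR
  obtain ⟨hxσ, hxc⟩ := hxR
  obtain ⟨k, d, b, hd, hb, rfl⟩ := hxσ
  have hlin : ∑ i, d i * dotQ c (b i) = 0 := by
    have hmap : dotQ c (∑ i, d i • b i) = ∑ i, d i * dotQ c (b i) := by
      rw [show dotQ c (∑ i, d i • b i) = (dotL c) (∑ i, d i • b i) from rfl, map_sum]
      refine Finset.sum_congr rfl fun i _ => ?_
      rw [map_smul, smul_eq_mul]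
      rfl
    rw [hmap] at hxc; exact hxc
  have hterm : ∀ i ∈ Finset.univ, d i * dotQ c (b i) = 0 :=
    (Finset.sum_eq_zero_iff_of_nonneg
      (fun i _ => mul_nonneg (hd i) (hc (b i) (subset_posSpan S (hb i))))).mp hlin
  have hex : ∃ i, d i • b i ≠ 0 := by
    by_contra hall
    push_neg at hall
    apply hx0
    rw [Finset.sum_eq_zero fun i _ => hall i]
  obtain ⟨i, hi⟩ := hex
  have hdi : d i ≠ 0 := fun h0 => hi (by rw [h0, zero_smul])
  have hbi : b i ≠ 0 := fun h0 => hi (by rw [h0, smul_zero])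
  have hdot : dotQ c (b i) = 0 := by
    have := hterm i (Finset.mem_univ i)
    exact (mul_eq_zero.mp this).resolve_left hdi
  refine ⟨b i, hb i, hbi, ?_⟩
  rw [hR]
  exact ⟨subset_posSpan S (hb i), hdot⟩

lemma face_ray {σ' σ R : Set (Fin n → ℚ)} (hsub : σ' ⊆ σ)
    (h : IsExtremeRay σ R) {b : Fin n → ℚ} (hbσ' : b ∈ σ') (hbR : b ∈ R) (hb0 : b ≠ 0) :
    IsExtremeRay σ' (σ' ∩ (Submodule.span ℚ R : Set (Fin n → ℚ))) ∧
      Submodule.span ℚ (σ' ∩ (Submodule.span ℚ R : Set (Fin n → ℚ))) = Submodule.span ℚ R := by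
  obtain ⟨c, hc, hR, hrank⟩ := h
  have hvan : ∀ y ∈ R, dotQ c y = 0 := by
    intro y hy; rw [hR] at hy; exact hy.2
  have hface : σ' ∩ (Submodule.span ℚ R : Set (Fin n → ℚ)) = {x ∈ σ' | dotQ c x = 0} := by
    ext x
    constructor
    · rintro ⟨h1, h2⟩
      exact ⟨h1, dotQ_eq_zero_of_mem_span hvan h2⟩
    · rintro ⟨h1, h2⟩
      refine ⟨h1, Submodule.subset_span ?_⟩
      rw [hR]; exact ⟨hsub h1, h2⟩
  have hbmem : b ∈ σ' ∩ (Submodule.span ℚ R : Set (Fin n → ℚ)) :=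
    ⟨hbσ', Submodule.subset_span hbR⟩
  have hle2 : Submodule.span ℚ (σ' ∩ (Submodule.span ℚ R : Set (Fin n → ℚ)))
      ≤ Submodule.span ℚ R :=
    Submodule.span_le.mpr fun x hx => hx.2
  have hle1 : Submodule.span ℚ {b}
      ≤ Submodule.span ℚ (σ' ∩ (Submodule.span ℚ R : Set (Fin n → ℚ))) :=
    Submodule.span_mono (Set.singleton_subset_iff.mpr hbmem)
  have hspaneq : Submodule.span ℚ (σ' ∩ (Submodule.span ℚ R : Set (Fin n → ℚ)))
      = Submodule.span ℚ R :=
    le_antisymm hle2 ((span_singleton_eq_span hrank hbR hb0).symm.le.trans hle1)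
  refine ⟨⟨c, fun x hx => hc x (hsub hx), hface, ?_⟩, hspaneq⟩
  rw [hspaneq]; exact hrank

lemma rays_subset_of_dim_one {σ : Set (Fin n → ℚ)} (h : coneDim σ = 1) :
    {R | IsExtremeRay σ R} ⊆ {σ} := by
  intro R hR
  have hA := ray_eq_inter_span hR
  obtain ⟨c, hc, hReq, hrank⟩ := hR
  have hle : Submodule.span ℚ R ≤ Submodule.span ℚ σ := by
    apply Submodule.span_mono
    rw [hReq]; exact fun x hx => hx.1
  have heq : Submodule.span ℚ R = Submodule.span ℚ σ :=
    Submodule.eq_of_le_of_finrank_eq hle (by rw [hrank]; exact h.symm)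
  simp only [Set.mem_singleton_iff]
  rw [hA, heq]
  exact Set.inter_eq_left.mpr Submodule.subset_span

lemma rays_empty_of_dim_zero {σ : Set (Fin n → ℚ)} (h : coneDim σ = 0) :
    {R | IsExtremeRay σ R} = ∅ := by
  ext R
  simp only [Set.mem_setOf_eq, Set.mem_empty_iff_false, iff_false]
  intro hR
  have hA := ray_eq_inter_span hR
  obtain ⟨c, hc, hReq, hrank⟩ := hR
  have hle : Submodule.span ℚ R ≤ Submodule.span ℚ σ := by
    apply Submodule.span_mono
    rw [hReq]; exact fun x hx => hx.1
  have := Submodule.finrank_mono hle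
  rw [hrank] at this
  unfold coneDim at h
  omega

end AuxCI

section Counting

variable {n : ℕ}

lemma span_inter_eq {τ R : Set (Fin n → ℚ)}
    (hrank : Module.finrank ℚ (Submodule.span ℚ R) = 1)
    (hray : IsExtremeRay τ (τ ∩ (Submodule.span ℚ R : Set (Fin n → ℚ)))) :
    Submodule.span ℚ (τ ∩ (Submodule.span ℚ R : Set (Fin n → ℚ))) = Submodule.span ℚ R := by
  obtain ⟨c, _, _, hr⟩ := hray
  exact Submodule.eq_of_le_of_finrank_eq
    (Submodule.span_le.mpr fun x hx => hx.2) (by rw [hr, hrank])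

lemma dsum_count {σ₁ σ₂ : Set (Fin n → ℚ)}
    (hf₁ : {R | IsExtremeRay σ₁ R}.Finite) (hf₂ : {R | IsExtremeRay σ₂ R}.Finite) :
    {R | IsExtremeRay (posSpan (σ₁ ∪ σ₂)) R}.Finite ∧
      {R | IsExtremeRay (posSpan (σ₁ ∪ σ₂)) R}.ncard ≤
        {R | IsExtremeRay σ₁ R}.ncard + {R | IsExtremeRay σ₂ R}.ncard := by
  classical
  set σ := posSpan (σ₁ ∪ σ₂) with hσdef
  set ψ : Set (Fin n → ℚ) → Set (Fin n → ℚ) := fun R =>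
    if IsExtremeRay σ₂ (σ₂ ∩ (Submodule.span ℚ R : Set (Fin n → ℚ)))
    then σ₂ ∩ (Submodule.span ℚ R : Set (Fin n → ℚ))
    else σ₁ ∩ (Submodule.span ℚ R : Set (Fin n → ℚ)) with hψ
  have key : ∀ R ∈ {R | IsExtremeRay σ R},
      ψ R ∈ {R | IsExtremeRay σ₁ R} ∪ {R | IsExtremeRay σ₂ R} ∧
      Submodule.span ℚ (ψ R) = Submodule.span ℚ R := by
    intro R hR
    have hR' : IsExtremeRay σ R := hR
    have hrank : Module.finrank ℚ (Submodule.span ℚ R) = 1 := by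
      obtain ⟨c, _, _, hr⟩ := hR'; exact hr
    by_cases hcond : IsExtremeRay σ₂ (σ₂ ∩ (Submodule.span ℚ R : Set (Fin n → ℚ)))
    · constructor
      · show ψ R ∈ _
        rw [hψ]; simp only [if_pos hcond]
        exact Or.inr hcond
      · rw [hψ]; simp only [if_pos hcond]
        exact span_inter_eq hrank hcond
    · obtain ⟨b, hbS, hb0, hbR⟩ := exists_gen hR'
      have hbσ₁ : b ∈ σ₁ := by
        rcases hbS with h | h
        · exact h
        · exact absurd
            (face_ray (fun x hx => subset_posSpan _ (Or.inr hx)) hR' h hbR hb0).1 hcond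
      have h1 := face_ray (fun x hx => subset_posSpan _ (Or.inl hx)) hR' hbσ₁ hbR hb0
      constructor
      · show ψ R ∈ _
        rw [hψ]; simp only [if_neg hcond]
        exact Or.inl h1.1
      · rw [hψ]; simp only [if_neg hcond]
        exact h1.2
  have hinj : Set.InjOn ψ {R | IsExtremeRay σ R} := by
    intro R hR R' hR' heq
    have e1 := (key R hR).2
    have e2 := (key R' hR').2
    have hsp : Submodule.span ℚ R = Submodule.span ℚ R' := by rw [← e1, ← e2, heq]
    rw [ray_eq_inter_span hR, ray_eq_inter_span hR', hsp]
  have hmaps : ∀ R ∈ {R | IsExtremeRay σ R},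
      ψ R ∈ {R | IsExtremeRay σ₁ R} ∪ {R | IsExtremeRay σ₂ R} :=
    fun R hR => (key R hR).1
  have hfin : {R | IsExtremeRay σ R}.Finite :=
    Set.Finite.of_finite_image ((hf₁.union hf₂).subset (Set.image_subset_iff.mpr hmaps)) hinj
  exact ⟨hfin, (Set.ncard_le_ncard_of_injOn ψ hmaps hinj (hf₁.union hf₂)).trans
    (Set.ncard_union_le _ _)⟩

lemma dsum_count_deg {σ₁ σ₂ : Set (Fin n → ℚ)} {a : Fin n → ℚ}
    (ha₂ : a ∈ σ₂) (ha0 : a ≠ 0)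
    (hσ₁ : σ₁ ⊆ (Submodule.span ℚ ({a} : Set (Fin n → ℚ)) : Set (Fin n → ℚ)))
    (hf₂ : {R | IsExtremeRay σ₂ R}.Finite) :
    {R | IsExtremeRay (posSpan (σ₁ ∪ σ₂)) R}.ncard ≤ {R | IsExtremeRay σ₂ R}.ncard := by
  classical
  set σ := posSpan (σ₁ ∪ σ₂) with hσdef
  have hsub₂ : σ₂ ⊆ σ := fun x hx => subset_posSpan _ (Or.inr hx)
  have key : ∀ R ∈ {R | IsExtremeRay σ R},
      IsExtremeRay σ₂ (σ₂ ∩ (Submodule.span ℚ R : Set (Fin n → ℚ))) ∧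
      Submodule.span ℚ (σ₂ ∩ (Submodule.span ℚ R : Set (Fin n → ℚ))) = Submodule.span ℚ R := by
    intro R hR
    have hR' : IsExtremeRay σ R := hR
    obtain ⟨b, hbS, hb0, hbR⟩ := exists_gen hR'
    rcases hbS with h | h
    · have hb : b ∈ Submodule.span ℚ ({a} : Set (Fin n → ℚ)) := hσ₁ h
      rw [Submodule.mem_span_singleton] at hb
      obtain ⟨q, rfl⟩ := hb
      have hq : q ≠ 0 := by rintro rfl; simp at hb0
      have haspan : a ∈ Submodule.span ℚ R := by
        have h1 : q • a ∈ Submodule.span ℚ R := Submodule.subset_span hbR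
        have h2 := Submodule.smul_mem _ q⁻¹ h1
        rwa [smul_smul, inv_mul_cancel₀ hq, one_smul] at h2
      have haR : a ∈ R := by
        rw [ray_eq_inter_span hR']
        exact ⟨hsub₂ ha₂, haspan⟩
      exact face_ray hsub₂ hR' ha₂ haR ha0
    · exact face_ray hsub₂ hR' h hbR hb0
  have hinj : Set.InjOn (fun R => σ₂ ∩ (Submodule.span ℚ R : Set (Fin n → ℚ)))
      {R | IsExtremeRay σ R} := by
    intro R hR R' hR' heq
    have e1 := (key R hR).2
    have e2 := (key R' hR').2
    simp only at heq
    have hsp : Submodule.span ℚ R = Submodule.span ℚ R' := by rw [← e1, ← e2, heq]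
    rw [ray_eq_inter_span hR, ray_eq_inter_span hR', hsp]
  exact Set.ncard_le_ncard_of_injOn _ (fun R hR => (key R hR).1) hinj hf₂

end Counting

lemma rays_bound {n : ℕ} (σ : Set (Fin n → ℚ)) (hσ : CICone σ) :
    {R | IsExtremeRay σ R}.Finite ∧
    (2 ≤ coneDim σ → {R | IsExtremeRay σ R}.ncard ≤ 2 * coneDim σ - 2) := by
  induction hσ with
  | simplex s r h =>
    have hdim : coneDim (posSpan (Set.range r)) = s := by
      unfold coneDim
      rw [span_posSpan, finrank_span_eq_card h, Fintype.card_fin]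
    have hsub : {R | IsExtremeRay (posSpan (Set.range r)) R} ⊆
        (fun b => posSpan (Set.range r) ∩ (Submodule.span ℚ {b} : Set (Fin n → ℚ))) ''
          (Set.range r) := by
      intro R hR
      have hR' : IsExtremeRay (posSpan (Set.range r)) R := hR
      obtain ⟨b, hbS, hb0, hbR⟩ := exists_gen hR'
      have hrank : Module.finrank ℚ (Submodule.span ℚ R) = 1 := by
        obtain ⟨c, _, _, hr⟩ := hR'; exact hr
      refine ⟨b, hbS, ?_⟩
      show posSpan (Set.range r) ∩ (Submodule.span ℚ {b} : Set (Fin n → ℚ)) = R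
      rw [span_singleton_eq_span hrank hbR hb0]
      exact (ray_eq_inter_span hR').symm
    have hfinimg := (Set.finite_range r).image
      (fun b => posSpan (Set.range r) ∩ (Submodule.span ℚ {b} : Set (Fin n → ℚ)))
    refine ⟨hfinimg.subset hsub, fun h2 => ?_⟩
    have hc1 := Set.ncard_le_ncard hsub hfinimg
    have hc2 := Set.ncard_image_le (s := Set.range r)
      (f := fun b => posSpan (Set.range r) ∩ (Submodule.span ℚ {b} : Set (Fin n → ℚ)))
      (Set.finite_range r)
    have hc3 : (Set.range r).ncard ≤ s := by
      rw [← Set.image_univ]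
      calc (r '' Set.univ).ncard ≤ (Set.univ : Set (Fin s)).ncard :=
            Set.ncard_image_le Set.finite_univ
        _ = s := by rw [Set.ncard_univ]; simp
    rw [hdim] at h2 ⊢
    omega
  | dsum σ₁ σ₂ h₁ h₂ hds ih₁ ih₂ =>
    obtain ⟨a, ⟨ha₁, ha₂⟩, hspan, -⟩ := hds
    obtain ⟨hfin₁, ihb₁⟩ := ih₁
    obtain ⟨hfin₂, ihb₂⟩ := ih₂
    obtain ⟨hfin, hcount⟩ := dsum_count hfin₁ hfin₂
    refine ⟨hfin, fun h2 => ?_⟩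
    have hdsum : coneDim (posSpan (σ₁ ∪ σ₂)) +
        Module.finrank ℚ (Submodule.span ℚ ({a} : Set (Fin n → ℚ))) =
        coneDim σ₁ + coneDim σ₂ := by
      unfold coneDim
      rw [span_posSpan, Submodule.span_union, ← hspan]
      exact Submodule.finrank_sup_add_finrank_inf_eq _ _
    have small : ∀ τ : Set (Fin n → ℚ), {R | IsExtremeRay τ R}.Finite →
        (2 ≤ coneDim τ → {R | IsExtremeRay τ R}.ncard ≤ 2 * coneDim τ - 2) →
        (coneDim τ ≤ 1 ∧ {R | IsExtremeRay τ R}.ncard ≤ coneDim τ) ∨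
        (2 ≤ coneDim τ ∧ {R | IsExtremeRay τ R}.ncard ≤ 2 * coneDim τ - 2) := by
      intro τ hfinτ hih
      rcases Nat.lt_or_ge (coneDim τ) 2 with hlt | hge
      · left
        refine ⟨by omega, ?_⟩
        rcases Nat.lt_or_ge (coneDim τ) 1 with hlt1 | hge1
        · have h0 : coneDim τ = 0 := by omega
          rw [rays_empty_of_dim_zero h0]
          simp
        · have h1 : coneDim τ = 1 := by omega
          rw [h1]
          calc {R | IsExtremeRay τ R}.ncard ≤ ({τ} : Set (Set (Fin n → ℚ))).ncard :=
                Set.ncard_le_ncard (rays_subset_of_dim_one h1) (Set.finite_singleton τ)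
            _ = 1 := Set.ncard_singleton τ
      · exact Or.inr ⟨hge, hih hge⟩
    by_cases ha0 : a = 0
    · subst ha0
      have hε : Module.finrank ℚ
          (Submodule.span ℚ ({(0 : Fin n → ℚ)} : Set (Fin n → ℚ))) = 0 := by
        rw [Submodule.span_zero_singleton]
        exact finrank_bot ℚ _
      rw [hε] at hdsum
      rcases small σ₁ hfin₁ ihb₁ with ⟨hle, hb⟩ | ⟨hge, hb⟩ <;>
        rcases small σ₂ hfin₂ ihb₂ with ⟨hle', hb'⟩ | ⟨hge', hb'⟩ <;> omega
    · have hε : Module.finrank ℚ (Submodule.span ℚ ({a} : Set (Fin n → ℚ))) = 1 :=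
        finrank_span_singleton ha0
      rw [hε] at hdsum
      have hle₁ : Submodule.span ℚ ({a} : Set (Fin n → ℚ)) ≤ Submodule.span ℚ σ₁ :=
        Submodule.span_le.mpr (Set.singleton_subset_iff.mpr (Submodule.subset_span ha₁))
      have hle₂ : Submodule.span ℚ ({a} : Set (Fin n → ℚ)) ≤ Submodule.span ℚ σ₂ :=
        Submodule.span_le.mpr (Set.singleton_subset_iff.mpr (Submodule.subset_span ha₂))
      have hd₁pos : 1 ≤ coneDim σ₁ := by
        have hm := Submodule.finrank_mono hle₁
        rw [hε] at hm
        exact hm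
      have hd₂pos : 1 ≤ coneDim σ₂ := by
        have hm := Submodule.finrank_mono hle₂
        rw [hε] at hm
        exact hm
      by_cases hd₁ : coneDim σ₁ = 1
      · have hspan₁ : Submodule.span ℚ ({a} : Set (Fin n → ℚ)) = Submodule.span ℚ σ₁ :=
          Submodule.eq_of_le_of_finrank_eq hle₁ (by rw [hε]; exact hd₁.symm)
        have hsubσ₁ : σ₁ ⊆ (Submodule.span ℚ ({a} : Set (Fin n → ℚ)) : Set (Fin n → ℚ)) := by
          rw [hspan₁]; exact Submodule.subset_span
        have hkey := dsum_count_deg ha₂ ha0 hsubσ₁ hfin₂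
        rcases small σ₂ hfin₂ ihb₂ with ⟨hle', hb'⟩ | ⟨hge', hb'⟩ <;> omega
      · by_cases hd₂ : coneDim σ₂ = 1
        · have hspan₂ : Submodule.span ℚ ({a} : Set (Fin n → ℚ)) = Submodule.span ℚ σ₂ :=
            Submodule.eq_of_le_of_finrank_eq hle₂ (by rw [hε]; exact hd₂.symm)
          have hsubσ₂ : σ₂ ⊆ (Submodule.span ℚ ({a} : Set (Fin n → ℚ)) : Set (Fin n → ℚ)) := by
            rw [hspan₂]; exact Submodule.subset_span
          have hkey := dsum_count_deg ha₁ ha0 hsubσ₂ hfin₁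
          rw [Set.union_comm σ₂ σ₁] at hkey
          rcases small σ₁ hfin₁ ihb₁ with ⟨hle', hb'⟩ | ⟨hge', hb'⟩ <;> omega
        · have hb := ihb₁ (by omega)
          have hb' := ihb₂ (by omega)
          omega


/-- A complete intersection cone of dimension `m > 1` has at most `2m - 2`
extreme rays. -/
theorem ciCone_rays_le {n : ℕ} (σ : Set (Fin n → ℚ)) (hσ : CICone σ)
    (m : ℕ) (hm : 1 < m) (hdim : coneDim σ = m) :
    {R | IsExtremeRay σ R}.ncard ≤ 2 * m - 2 := by
  have h := (rays_bound σ hσ).2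
  rw [hdim] at h
  exact h hm
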